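/- arXiv:math/9908140 — 2 statements merged into one kernel-verified Lean document; each statement's English description precedes it below -/
import Mathlib

section
/- Let q be a real number with q ≠ 1, let n be a positive integer, and let f : ℝ → ℝ be a function defined on an interval (-ρ, ρ) with ρ > 0 whose n-th derivative at x = 0 exists. Then the limit lim_{x → 0} D_q^n f(x) exists and equals (f^(n)(0)/n!) · (q;q)_n/(1-q)^n, where (q;q)_n = ∏_{j=1}^{n} (1 - q^j). -/
/-!
Let `T` be the Taylor polynomial of degree `n` of `f` at `0` and `R = f - T`. Differentiability of
`f^{(n-1)}` at `0` alone already gives the Peano remainder `R = o(x^n)`. On functions differentiable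
at `0` the operator `D_q` is linear, and `D_q x^m = [m]_q x^{m-1}` with `[m]_q = (1-q^m)/(1-q)`, so
`D_q^n T` is the constant `f^{(n)}(0)/n! ⬝ [n]_q [n-1]_q ⋯ [1]_q = f^{(n)}(0)/n! ⬝ (q;q)_n/(1-q)^n`.
Finally `D_q` maps `o(x^{m+1})` to `o(x^m)`, because `R(qx)` is `o(x^{m+1})` as well, so
`D_q^n R = o(1)`.
-/

open Filter Finset

/-- The `q`-derivative operator: `D_q f x = (f x - f (q x)) / ((1-q) x)` for `x ≠ 0`,
and `D_q f 0 = f'(0)`. -/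
noncomputable def qDeriv (q : ℝ) (f : ℝ → ℝ) : ℝ → ℝ :=
  fun x => if x = 0 then deriv f 0 else (f x - f (q * x)) / ((1 - q) * x)

/-- The `q`-Pochhammer symbol `(a;q)_n = ∏_{j=0}^{n-1} (1 - a q^j)`. -/
noncomputable def qPoch (a q : ℝ) (n : ℕ) : ℝ := ∏ j ∈ Finset.range n, (1 - a * q ^ j)

open Asymptotics Set Topology

theorem taylor_isLittleO_of_differentiableAt_iteratedDeriv {E : Type*} [NormedAddCommGroup E]
    [NormedSpace ℝ E] {f : ℝ → E} {x₀ : ℝ} (n : ℕ)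
    (hf : ∀ k < n, ∀ᶠ x in 𝓝 x₀, DifferentiableAt ℝ (iteratedDeriv k f) x)
    (hf' : DifferentiableAt ℝ (iteratedDeriv n f) x₀) :
    (fun x ↦ f x - taylorWithinEval f (n + 1) univ x₀ x) =o[𝓝 x₀] fun x ↦ (x - x₀) ^ (n + 1) := by
  induction n generalizing f with
  | zero =>
    rw [iteratedDeriv_zero] at hf'
    simpa [taylorWithinEval_succ, sub_sub] using hasDerivAt_iff_isLittleO.1 hf'.hasDerivAt
  | succ n ih =>
    obtain ⟨ε, hε, hdiff⟩ := Metric.eventually_nhds_iff_ball.1 (by simpa using hf 0 n.succ_pos)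
    have hball : 𝓝[Metric.ball x₀ ε] x₀ = 𝓝 x₀ :=
      Metric.isOpen_ball.nhdsWithin_eq (Metric.mem_ball_self hε)
    have hderiv := ih (f := deriv f)
      (fun k hk ↦ by simpa only [← iteratedDeriv_succ'] using hf (k + 1) (by omega))
      (by rwa [← iteratedDeriv_succ'])
    have key := (convex_ball x₀ ε).isLittleO_pow_succ_real (Metric.mem_ball_self hε)
      (f := fun x ↦ f x - taylorWithinEval f (n + 2) univ x₀ x)
      (fun x hx ↦ ((hdiff x hx).hasDerivAt.sub
        (hasDerivAt_taylorWithinEval_succ f (n + 1))).hasDerivWithinAt)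
      (by rw [hball, derivWithin_univ]; exact hderiv)
    simpa [hball, taylorWithinEval_self] using key

theorem isLittleO_div_of_isLittleO_pow_succ {g : ℝ → ℝ} {m : ℕ}
    (h : g =o[𝓝 0] fun x ↦ x ^ (m + 1)) : (fun x ↦ g x / x) =o[𝓝 0] fun x ↦ x ^ m := by
  rw [isLittleO_iff] at h ⊢
  intro c hc
  filter_upwards [h hc] with x hx
  rcases eq_or_ne x 0 with rfl | hx0
  · simp only [div_zero, norm_zero]
    positivity
  · rw [norm_div, div_le_iff₀ (norm_pos_iff.2 hx0)]
    simpa [pow_succ, mul_assoc] using hx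

theorem hasDerivAt_zero_of_isLittleO_pow_succ {g : ℝ → ℝ} {m : ℕ}
    (h : g =o[𝓝 0] fun x ↦ x ^ (m + 1)) : HasDerivAt g 0 0 := by
  have hg0 : g 0 = 0 := h.isBigO.eq_zero_imp.self_of_nhds (by simp)
  have hslope : Tendsto (fun x ↦ g x / x) (𝓝 0) (𝓝 0) :=
    (isLittleO_one_iff ℝ).1 ((isLittleO_div_of_isLittleO_pow_succ h).trans_isBigO
      (((continuous_pow m).tendsto 0).isBigO_one ℝ))
  rw [hasDerivAt_iff_tendsto_slope]
  refine (hslope.mono_left nhdsWithin_le_nhds).congr fun x ↦ ?_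
  rw [slope_def_field, hg0, sub_zero, sub_zero]

theorem qPoch_self_div_pow (q : ℝ) (n : ℕ) :
    qPoch q q n / (1 - q) ^ n = ∏ i ∈ range n, (1 - q ^ (n - i)) / (1 - q) := by
  rw [prod_div_distrib, prod_const, card_range, qPoch, ← prod_range_reflect]
  congr 1
  refine prod_congr rfl fun i hi ↦ ?_
  rw [← pow_succ', show n - 1 - i + 1 = n - i by have := mem_range.1 hi; omega]

section Linearity

variable {q : ℝ}

theorem qDeriv_apply_of_ne_zero (f : ℝ → ℝ) {x : ℝ} (hx : x ≠ 0) :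
    qDeriv q f x = (f x - f (q * x)) / ((1 - q) * x) :=
  if_neg hx

theorem qDeriv_apply_zero (f : ℝ → ℝ) : qDeriv q f 0 = deriv f 0 :=
  if_pos rfl

theorem qDeriv_add {f g : ℝ → ℝ} (hf : DifferentiableAt ℝ f 0) (hg : DifferentiableAt ℝ g 0) :
    qDeriv q (f + g) = qDeriv q f + qDeriv q g := by
  ext x
  rcases eq_or_ne x 0 with rfl | hx
  · simp only [Pi.add_apply, qDeriv_apply_zero, deriv_add hf hg]
  · simp only [Pi.add_apply, qDeriv_apply_of_ne_zero _ hx, add_sub_add_comm, add_div]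

theorem qDeriv_iterate_add {f g : ℝ → ℝ} {n : ℕ}
    (hf : ∀ k < n, DifferentiableAt ℝ ((qDeriv q)^[k] f) 0)
    (hg : ∀ k < n, DifferentiableAt ℝ ((qDeriv q)^[k] g) 0) :
    (qDeriv q)^[n] (f + g) = (qDeriv q)^[n] f + (qDeriv q)^[n] g := by
  induction n with
  | zero => rfl
  | succ n ih =>
    simp only [Function.iterate_succ_apply']
    rw [ih (fun k hk ↦ hf k (by omega)) (fun k hk ↦ hg k (by omega)),
      qDeriv_add (hf n n.lt_succ_self) (hg n n.lt_succ_self)]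

theorem qDeriv_sum {ι : Type*} {s : Finset ι} {f : ι → ℝ → ℝ}
    (hf : ∀ i ∈ s, DifferentiableAt ℝ (f i) 0) :
    qDeriv q (∑ i ∈ s, f i) = ∑ i ∈ s, qDeriv q (f i) := by
  ext x
  rcases eq_or_ne x 0 with rfl | hx
  · simp only [Finset.sum_apply, qDeriv_apply_zero, ← deriv_sum hf]
  · simp only [Finset.sum_apply, qDeriv_apply_of_ne_zero _ hx, ← Finset.sum_sub_distrib,
      Finset.sum_div]

theorem qDeriv_iterate_sum {ι : Type*} {s : Finset ι} {f : ι → ℝ → ℝ} {n : ℕ}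
    (hf : ∀ i ∈ s, ∀ k < n, DifferentiableAt ℝ ((qDeriv q)^[k] (f i)) 0) :
    (qDeriv q)^[n] (∑ i ∈ s, f i) = ∑ i ∈ s, (qDeriv q)^[n] (f i) := by
  induction n with
  | zero => rfl
  | succ n ih =>
    simp only [Function.iterate_succ_apply']
    rw [ih (fun i hi k hk ↦ hf i hi k (by omega)),
      qDeriv_sum (fun i hi ↦ hf i hi n n.lt_succ_self)]

end Linearity

section Polynomials

variable {q : ℝ}

theorem qDeriv_const_mul_pow (hq : q ≠ 1) (a : ℝ) (m : ℕ) :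
    qDeriv q (fun x ↦ a * x ^ m) = fun x ↦ a * ((1 - q ^ m) / (1 - q)) * x ^ (m - 1) := by
  have hq' : 1 - q ≠ 0 := sub_ne_zero.2 hq.symm
  ext x
  rcases eq_or_ne x 0 with rfl | hx
  · rw [qDeriv_apply_zero, deriv_const_mul_field, deriv_pow_field]
    rcases m with _ | _ | m <;> simp [hq']
  · rw [qDeriv_apply_of_ne_zero _ hx]
    rcases m with _ | m
    · simp
    · rw [Nat.add_sub_cancel]
      field_simp
      ring

/-- For `k > m` the factor `i = m` of the product is `0`, so the truncated exponents do no harm. -/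
theorem qDeriv_iterate_const_mul_pow (hq : q ≠ 1) (a : ℝ) (m k : ℕ) :
    (qDeriv q)^[k] (fun x ↦ a * x ^ m) =
      fun x ↦ a * (∏ i ∈ range k, (1 - q ^ (m - i)) / (1 - q)) * x ^ (m - k) := by
  induction k with
  | zero => simp
  | succ k ih =>
    rw [Function.iterate_succ_apply', ih, qDeriv_const_mul_pow hq, prod_range_succ, mul_assoc a,
      Nat.sub_sub]

theorem qDeriv_iterate_sum_const_mul_pow (hq : q ≠ 1) (c : ℕ → ℝ) (s : Finset ℕ) (k : ℕ) :
    (qDeriv q)^[k] (fun x ↦ ∑ j ∈ s, c j * x ^ j) =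
      fun x ↦ ∑ j ∈ s, c j * (∏ i ∈ range k, (1 - q ^ (j - i)) / (1 - q)) * x ^ (j - k) := by
  rw [← Finset.sum_fn, qDeriv_iterate_sum fun j _ i _ ↦ by
    rw [qDeriv_iterate_const_mul_pow hq]; fun_prop]
  simp only [qDeriv_iterate_const_mul_pow hq, Finset.sum_fn]

theorem differentiableAt_qDeriv_iterate_sum_const_mul_pow (hq : q ≠ 1) (c : ℕ → ℝ)
    (s : Finset ℕ) (k : ℕ) :
    DifferentiableAt ℝ ((qDeriv q)^[k] (fun x ↦ ∑ j ∈ s, c j * x ^ j)) 0 := by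
  rw [qDeriv_iterate_sum_const_mul_pow hq]
  fun_prop

theorem qDeriv_iterate_sum_range_const_mul_pow (hq : q ≠ 1) (c : ℕ → ℝ) (n : ℕ) :
    (qDeriv q)^[n] (fun x ↦ ∑ j ∈ range (n + 1), c j * x ^ j) =
      fun _ ↦ c n * (qPoch q q n / (1 - q) ^ n) := by
  rw [qDeriv_iterate_sum_const_mul_pow hq, qPoch_self_div_pow]
  ext x
  have hlow : ∀ j ∈ range n,
      c j * (∏ i ∈ range n, (1 - q ^ (j - i)) / (1 - q)) * x ^ (j - n) = 0 :=
    fun j hj ↦ by rw [prod_eq_zero hj (by simp), mul_zero, zero_mul]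
  rw [sum_range_succ, sum_eq_zero hlow, zero_add, Nat.sub_self, pow_zero, mul_one]

end Polynomials

section Remainder

variable (q : ℝ)

theorem qDeriv_isLittleO_pow {g : ℝ → ℝ} {m : ℕ} (h : g =o[𝓝 0] fun x ↦ x ^ (m + 1)) :
    qDeriv q g =o[𝓝 0] fun x ↦ x ^ m := by
  have hdil : (fun x ↦ g (q * x)) =o[𝓝 0] fun x ↦ x ^ (m + 1) :=
    (h.comp_tendsto ((continuous_const_mul q).tendsto' 0 0 (mul_zero q))).trans_isBigO
      (by simpa only [Function.comp_def, mul_pow] using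
        isBigO_const_mul_self (q ^ (m + 1)) (fun x : ℝ ↦ x ^ (m + 1)) (𝓝 0))
  have heq : qDeriv q g = fun x ↦ (1 - q)⁻¹ * (g x / x - g (q * x) / x) := by
    ext x
    rcases eq_or_ne x 0 with rfl | hx
    · simp [qDeriv_apply_zero, (hasDerivAt_zero_of_isLittleO_pow_succ h).deriv]
    · rw [qDeriv_apply_of_ne_zero _ hx, mul_comm (1 - q), ← div_div, sub_div, div_eq_inv_mul]
  rw [heq]
  exact ((isLittleO_div_of_isLittleO_pow_succ h).sub
    (isLittleO_div_of_isLittleO_pow_succ hdil)).const_mul_left _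

theorem qDeriv_iterate_isLittleO_pow {g : ℝ → ℝ} (k m : ℕ)
    (h : g =o[𝓝 0] fun x ↦ x ^ (m + k)) : (qDeriv q)^[k] g =o[𝓝 0] fun x ↦ x ^ m := by
  induction k generalizing g with
  | zero => exact h
  | succ k ih => exact ih (qDeriv_isLittleO_pow q h)

theorem differentiableAt_qDeriv_iterate_of_isLittleO {g : ℝ → ℝ} {n k : ℕ}
    (h : g =o[𝓝 0] fun x ↦ x ^ n) (hk : k < n) :
    DifferentiableAt ℝ ((qDeriv q)^[k] g) 0 := by
  obtain ⟨m, rfl⟩ : ∃ m, n = m + 1 + k := ⟨n - k - 1, by omega⟩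
  exact (hasDerivAt_zero_of_isLittleO_pow_succ
    (qDeriv_iterate_isLittleO_pow q k (m + 1) h)).differentiableAt

theorem tendsto_qDeriv_iterate_of_isLittleO {g : ℝ → ℝ} {n : ℕ}
    (h : g =o[𝓝 0] fun x ↦ x ^ n) : Tendsto ((qDeriv q)^[n] g) (𝓝 0) (𝓝 0) :=
  (isLittleO_one_iff ℝ).1 (by simpa using qDeriv_iterate_isLittleO_pow q n 0 (by simpa using h))

end Remainder

/-- If `f^{(n)}(0)` exists, then `lim_{x → 0} D_q^n f x = (f^{(n)}(0)/n!) ⬝ (q;q)_n/(1-q)^n`. -/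
theorem tendsto_qDeriv_iterate (q : ℝ) (hq : q ≠ 1) (n : ℕ) (hn : 0 < n)
    (f : ℝ → ℝ)
    (hf : ∀ k < n - 1, ∀ᶠ x in nhds (0 : ℝ), DifferentiableAt ℝ (iteratedDeriv k f) x)
    (hf' : DifferentiableAt ℝ (iteratedDeriv (n - 1) f) 0) :
    Filter.Tendsto ((qDeriv q)^[n] f) (nhdsWithin (0 : ℝ) {0}ᶜ)
      (nhds (iteratedDeriv n f 0 / n.factorial * (qPoch q q n / (1 - q) ^ n))) := by
  obtain ⟨m, rfl⟩ : ∃ m, n = m + 1 := ⟨n - 1, by omega⟩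
  rw [Nat.add_sub_cancel] at hf hf'
  set T : ℝ → ℝ := fun x ↦ ∑ j ∈ range (m + 2), iteratedDeriv j f 0 / j.factorial * x ^ j
  have hT : ∀ x, taylorWithinEval f (m + 1) univ 0 x = T x := fun x ↦ by
    simp only [taylor_within_apply, iteratedDerivWithin_univ, sub_zero, smul_eq_mul, T]
    exact sum_congr rfl fun j _ ↦ by ring
  have hR : (f - T) =o[𝓝 0] fun x ↦ x ^ (m + 1) := by
    refine (taylor_isLittleO_of_differentiableAt_iteratedDeriv m hf hf').congr' ?_ (by simp)
    exact .of_forall fun x ↦ by simp only [Pi.sub_apply, hT]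
  have hsplit : (qDeriv q)^[m + 1] f =
      (fun _ ↦ iteratedDeriv (m + 1) f 0 / (m + 1).factorial *
        (qPoch q q (m + 1) / (1 - q) ^ (m + 1))) + (qDeriv q)^[m + 1] (f - T) := by
    conv_lhs => rw [← add_sub_cancel T f]
    rw [qDeriv_iterate_add
      (fun k _ ↦ differentiableAt_qDeriv_iterate_sum_const_mul_pow hq _ _ k)
      (fun k hk ↦ differentiableAt_qDeriv_iterate_of_isLittleO q hR hk),
      qDeriv_iterate_sum_range_const_mul_pow hq]
  rw [← tendsto_sub_nhds_zero_iff]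
  refine ((tendsto_qDeriv_iterate_of_isLittleO q hR).mono_left nhdsWithin_le_nhds).congr
    fun x ↦ ?_
  rw [hsplit, Pi.add_apply, add_sub_cancel_left]
end

section
/- Let q be a real number with q ≠ 0, q ≠ 1 and q ≠ -1, let n be a positive integer, let f : ℝ → ℝ be defined on (-ρ, ρ) with ρ > 0 and suppose f^(n)(0) exists. Define F(x) = Σ_{k=0}^{n} (-1)^k q^{-k(n-1) + C(k,2)} [n choose k]_q f(q^k x). Then F is n times differentiable at 0 with F^(m)(0) = 0 for m = 0, 1, ..., n-1 and F^(n)(0) = (q;q)_n f^(n)(0). -/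
open Filter Finset

/-- The `q`-binomial coefficient `[n choose k]_q = (q;q)_n / ((q;q)_k (q;q)_{n-k})`. -/
noncomputable def qBinom (q : ℝ) (n k : ℕ) : ℝ :=
  qPoch q q n / (qPoch q q k * qPoch q q (n - k))

/-!
Each term `f (q^k x)` of `F` contributes `q^{km} f^{(m)}(0)` to `F^{(m)}(0)`, so
`F^{(m)}(0) = (∑_k c_k q^{km}) f^{(m)}(0)` where `c_k` are the coefficients of `F`. By Rothe's
`q`-binomial theorem `∑_k (-1)^k q^{C(k,2)} [n choose k]_q t^k = (t;q)_n` this moment is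
`(q^{m-n+1};q)_n`, which contains the factor `1 - q^{m-n+1} q^{n-1-m} = 0` when `m < n` and is
`(q;q)_n` when `m = n`.
-/

open Topology

lemma one_sub_mul_pow_ne_zero {q : ℝ} (hq1 : q ≠ 1) (hqm1 : q ≠ -1) (j : ℕ) :
    1 - q * q ^ j ≠ 0 := by
  rw [← pow_succ', sub_ne_zero, ne_comm]
  simp [pow_eq_one_iff_cases, hq1, hqm1]

lemma qPoch_succ (a q : ℝ) (n : ℕ) : qPoch a q (n + 1) = qPoch a q n * (1 - a * q ^ n) :=
  prod_range_succ _ _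

lemma qPoch_succ' (a q : ℝ) (n : ℕ) : qPoch a q (n + 1) = (1 - a) * qPoch (a * q) q n := by
  simp only [qPoch, prod_range_succ', pow_succ', pow_zero, mul_one, mul_assoc, mul_comm]

lemma qPoch_self_ne_zero {q : ℝ} (hq1 : q ≠ 1) (hqm1 : q ≠ -1) (n : ℕ) : qPoch q q n ≠ 0 :=
  prod_ne_zero_iff.2 fun j _ => one_sub_mul_pow_ne_zero hq1 hqm1 j

lemma qPoch_zero (a q : ℝ) : qPoch a q 0 = 1 :=
  prod_range_zero _

lemma qBinom_zero_right {q : ℝ} (hq1 : q ≠ 1) (hqm1 : q ≠ -1) (n : ℕ) : qBinom q n 0 = 1 := by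
  rw [qBinom, Nat.sub_zero, qPoch_zero, one_mul, div_self (qPoch_self_ne_zero hq1 hqm1 n)]

lemma qBinom_self {q : ℝ} (hq1 : q ≠ 1) (hqm1 : q ≠ -1) (n : ℕ) : qBinom q n n = 1 := by
  rw [qBinom, Nat.sub_self, qPoch_zero, mul_one, div_self (qPoch_self_ne_zero hq1 hqm1 n)]

lemma qBinom_succ_succ {q : ℝ} (hq1 : q ≠ 1) (hqm1 : q ≠ -1) {n k : ℕ} (hk : k < n) :
    qBinom q (n + 1) (k + 1) = q ^ (k + 1) * qBinom q n (k + 1) + qBinom q n k := by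
  obtain ⟨j, rfl⟩ : ∃ j, n = k + 1 + j := ⟨n - (k + 1), by omega⟩
  rw [qBinom, qBinom, qBinom, show k + 1 + j + 1 - (k + 1) = j + 1 by omega,
    show k + 1 + j - (k + 1) = j by omega, show k + 1 + j - k = j + 1 by omega,
    qPoch_succ q q (k + 1 + j), qPoch_succ q q k, qPoch_succ q q j]
  have := qPoch_self_ne_zero hq1 hqm1 (k + 1 + j)
  have := qPoch_self_ne_zero hq1 hqm1 k
  have := qPoch_self_ne_zero hq1 hqm1 j
  have := one_sub_mul_pow_ne_zero hq1 hqm1 k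
  have := one_sub_mul_pow_ne_zero hq1 hqm1 j
  field_simp
  ring

/-- Rothe's `q`-binomial theorem. -/
theorem qPoch_eq_sum_qBinom {q : ℝ} (hq1 : q ≠ 1) (hqm1 : q ≠ -1) (t : ℝ) (n : ℕ) :
    qPoch t q n = ∑ k ∈ range (n + 1), (-1) ^ k * q ^ k.choose 2 * qBinom q n k * t ^ k := by
  induction n generalizing t with
  | zero => simp [qPoch, qBinom_zero_right hq1 hqm1]
  | succ n ih =>
    have hchoose (k : ℕ) : (k + 1).choose 2 = k.choose 2 + k := by
      simp [Nat.choose_succ_succ, add_comm]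
    have hlast : (-1) ^ (n + 1) * q ^ (n + 1).choose 2 * qBinom q (n + 1) (n + 1) * t ^ (n + 1)
        = -(t * ((-1) ^ n * q ^ n.choose 2 * qBinom q n n * (t * q) ^ n)) := by
      rw [qBinom_self hq1 hqm1, qBinom_self hq1 hqm1, hchoose]
      ring
    have hmid : ∀ k ∈ range n,
        (-1) ^ (k + 1) * q ^ (k + 1).choose 2 * qBinom q (n + 1) (k + 1) * t ^ (k + 1)
          = (-1) ^ (k + 1) * q ^ (k + 1).choose 2 * qBinom q n (k + 1) * (t * q) ^ (k + 1)
            - t * ((-1) ^ k * q ^ k.choose 2 * qBinom q n k * (t * q) ^ k) := by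
      intro k hk
      rw [qBinom_succ_succ hq1 hqm1 (mem_range.1 hk), hchoose]
      ring
    rw [qPoch_succ', ih, sub_mul, one_mul, mul_sum]
    conv_rhs => rw [sum_range_succ', sum_range_succ, sum_congr rfl hmid, sum_sub_distrib, hlast]
    conv_lhs => rw [sum_range_succ', sum_range_succ _ n]
    simp only [qBinom_zero_right hq1 hqm1]
    ring

noncomputable def qDiffCoeff (q : ℝ) (n k : ℕ) : ℝ :=
  (-1) ^ k * q ^ (-(k : ℤ) * ((n : ℤ) - 1) + (k.choose 2 : ℤ)) * qBinom q n k

theorem sum_qDiffCoeff_mul_pow {q : ℝ} (hq0 : q ≠ 0) (hq1 : q ≠ 1) (hqm1 : q ≠ -1) (n m : ℕ) :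
    ∑ k ∈ range (n + 1), qDiffCoeff q n k * (q ^ k) ^ m = qPoch (q ^ ((m : ℤ) - n + 1)) q n := by
  rw [qPoch_eq_sum_qBinom hq1 hqm1]
  refine sum_congr rfl fun k _ => ?_
  have hexp : q ^ (-(k : ℤ) * ((n : ℤ) - 1) + (k.choose 2 : ℤ)) * (q ^ k) ^ m
      = q ^ k.choose 2 * (q ^ ((m : ℤ) - n + 1)) ^ k := by
    simp only [← zpow_natCast, ← zpow_mul, ← zpow_add₀ hq0]
    congr 1
    ring
  rw [qDiffCoeff]
  linear_combination (-1) ^ k * qBinom q n k * hexp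

lemma qPoch_zpow_eq_zero {q : ℝ} (hq0 : q ≠ 0) {m n : ℕ} (hmn : m < n) :
    qPoch (q ^ ((m : ℤ) - n + 1)) q n = 0 := by
  refine prod_eq_zero (i := n - 1 - m) (mem_range.2 (by omega)) ?_
  rw [← zpow_natCast, ← zpow_add₀ hq0, show (m : ℤ) - n + 1 + ((n - 1 - m : ℕ) : ℤ) = 0 by omega,
    zpow_zero, sub_self]

section Dilation

variable {ι : Type*} (s : Finset ι) (c r : ι → ℝ) (f : ℝ → ℝ)

noncomputable def dilationSum (m : ℕ) (x : ℝ) : ℝ :=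
  ∑ i ∈ s, c i * r i ^ m * iteratedDeriv m f (r i * x)

lemma dilationSum_apply_zero (m : ℕ) :
    dilationSum s c r f m 0 = (∑ i ∈ s, c i * r i ^ m) * iteratedDeriv m f 0 := by
  simp only [dilationSum, mul_zero, sum_mul]

variable {s c r f}

lemma hasDerivAt_dilationSum {m : ℕ} {x : ℝ}
    (hf : ∀ i ∈ s, DifferentiableAt ℝ (iteratedDeriv m f) (r i * x)) :
    HasDerivAt (dilationSum s c r f m) (dilationSum s c r f (m + 1) x) x := by
  refine HasDerivAt.fun_sum fun i hi => ?_
  have hfi : HasDerivAt (iteratedDeriv m f) (iteratedDeriv (m + 1) f (r i * x)) (r i * x) := by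
    rw [iteratedDeriv_succ]
    exact (hf i hi).hasDerivAt
  exact ((hfi.comp x ((hasDerivAt_id x).const_mul (r i))).const_mul (c i * r i ^ m)).congr_deriv
    (by ring)

lemma eventually_hasDerivAt_dilationSum {m : ℕ}
    (hf : ∀ᶠ x in 𝓝 0, DifferentiableAt ℝ (iteratedDeriv m f) x) :
    ∀ᶠ x in 𝓝 0, HasDerivAt (dilationSum s c r f m) (dilationSum s c r f (m + 1) x) x := by
  have hdil (i : ι) : Tendsto (fun x => r i * x) (𝓝 0) (𝓝 0) :=
    (continuous_const_mul (r i)).tendsto' 0 0 (mul_zero _)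
  have hf' : ∀ᶠ x in 𝓝 0, ∀ i ∈ s, DifferentiableAt ℝ (iteratedDeriv m f) (r i * x) :=
    (eventually_all_finset s).2 fun i _ => (hdil i).eventually hf
  exact hf'.mono fun x => hasDerivAt_dilationSum

lemma iteratedDeriv_dilation_eventuallyEq {m : ℕ}
    (hf : ∀ j < m, ∀ᶠ x in 𝓝 0, DifferentiableAt ℝ (iteratedDeriv j f) x) :
    iteratedDeriv m (fun x => ∑ i ∈ s, c i * f (r i * x)) =ᶠ[𝓝 0] dilationSum s c r f m := by
  induction m with
  | zero => exact .of_forall fun x => by simp [dilationSum]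
  | succ m ih =>
    rw [iteratedDeriv_succ]
    exact (ih fun j hj => hf j (by omega)).deriv.trans <|
      (eventually_hasDerivAt_dilationSum (hf m m.lt_succ_self)).mono fun x hx => hx.deriv

lemma eventually_differentiableAt_iteratedDeriv_dilation {m : ℕ}
    (hf : ∀ j ≤ m, ∀ᶠ x in 𝓝 0, DifferentiableAt ℝ (iteratedDeriv j f) x) :
    ∀ᶠ x in 𝓝 0, DifferentiableAt ℝ (iteratedDeriv m (fun x => ∑ i ∈ s, c i * f (r i * x))) x := by
  filter_upwards [(iteratedDeriv_dilation_eventuallyEq fun j hj => hf j hj.le).eventually_nhds,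
    eventually_hasDerivAt_dilationSum (hf m le_rfl)] with x hx hD
  exact Filter.EventuallyEq.differentiableAt_iff hx |>.2 hD.differentiableAt

lemma iteratedDeriv_dilation_zero {m : ℕ}
    (hf : ∀ j < m, ∀ᶠ x in 𝓝 0, DifferentiableAt ℝ (iteratedDeriv j f) x) :
    iteratedDeriv m (fun x => ∑ i ∈ s, c i * f (r i * x)) 0
      = (∑ i ∈ s, c i * r i ^ m) * iteratedDeriv m f 0 := by
  rw [(iteratedDeriv_dilation_eventuallyEq hf).eq_of_nhds, dilationSum_apply_zero]

lemma hasDerivAt_iteratedDeriv_dilation_zero {m : ℕ}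
    (hf : ∀ j < m, ∀ᶠ x in 𝓝 0, DifferentiableAt ℝ (iteratedDeriv j f) x)
    (hf' : DifferentiableAt ℝ (iteratedDeriv m f) 0) :
    HasDerivAt (iteratedDeriv m (fun x => ∑ i ∈ s, c i * f (r i * x)))
      ((∑ i ∈ s, c i * r i ^ (m + 1)) * iteratedDeriv (m + 1) f 0) 0 := by
  rw [← dilationSum_apply_zero]
  refine (hasDerivAt_dilationSum fun i _ => ?_).congr_of_eventuallyEq
    (iteratedDeriv_dilation_eventuallyEq hf)
  rwa [mul_zero]

end Dilation

/-- If `f^{(n)}(0)` exists and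
`F(x) = ∑_{k=0}^n (-1)^k q^{-k(n-1)+C(k,2)} [n choose k]_q f(q^k x)`, then `F` is `n` times
differentiable at `0` with `F^{(m)}(0) = 0` for `m < n` and `F^{(n)}(0) = (q;q)_n f^{(n)}(0)`. -/
theorem iteratedDeriv_qCombination (q : ℝ) (hq0 : q ≠ 0) (hq1 : q ≠ 1) (hqm1 : q ≠ -1)
    (n : ℕ) (hn : 0 < n) (f : ℝ → ℝ)
    (hf : ∀ k < n - 1, ∀ᶠ x in nhds (0 : ℝ), DifferentiableAt ℝ (iteratedDeriv k f) x)
    (hf' : DifferentiableAt ℝ (iteratedDeriv (n - 1) f) 0)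
    (F : ℝ → ℝ)
    (hF : ∀ x : ℝ, F x = ∑ k ∈ Finset.range (n + 1),
      (-1 : ℝ) ^ k * q ^ (-(k : ℤ) * ((n : ℤ) - 1) + (k.choose 2 : ℤ)) *
        qBinom q n k * f (q ^ k * x)) :
    (∀ k < n - 1, ∀ᶠ x in nhds (0 : ℝ), DifferentiableAt ℝ (iteratedDeriv k F) x) ∧
    DifferentiableAt ℝ (iteratedDeriv (n - 1) F) 0 ∧
    (∀ m < n, iteratedDeriv m F 0 = 0) ∧
    iteratedDeriv n F 0 = qPoch q q n * iteratedDeriv n f 0 := by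
  obtain ⟨n, rfl⟩ : ∃ m, n = m + 1 := ⟨n - 1, by omega⟩
  rw [Nat.add_sub_cancel] at hf hf' ⊢
  obtain rfl : F = fun x => ∑ k ∈ range (n + 2), qDiffCoeff q (n + 1) k * f (q ^ k * x) :=
    funext hF
  have hderiv := hasDerivAt_iteratedDeriv_dilation_zero (s := range (n + 2))
    (c := qDiffCoeff q (n + 1)) (r := (q ^ ·)) hf hf'
  refine ⟨fun k hk => eventually_differentiableAt_iteratedDeriv_dilation
    fun j hj => hf j (by omega), hderiv.differentiableAt, fun m hm => ?_, ?_⟩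
  · rw [iteratedDeriv_dilation_zero fun j hj => hf j (by omega),
      sum_qDiffCoeff_mul_pow hq0 hq1 hqm1, qPoch_zpow_eq_zero hq0 hm, zero_mul]
  · rw [iteratedDeriv_succ, hderiv.deriv, sum_qDiffCoeff_mul_pow hq0 hq1 hqm1, sub_self,
      zero_add, zpow_one]
end
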